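/- If ℰ and ℱ are countable partitions of a space such that each element of ℰ intersects at most k elements of ℱ and each element of ℱ intersects at most k elements of ℰ, then for every probability measure μ, |H(μ, ℰ) − H(μ, ℱ)| ≤ 2 log k. -/

import Mathlib

open MeasureTheory

/-- `ent p = -p log₂ p`, the entropy summand (base-2 logarithm). -/
noncomputable def ent (p : ℝ) : ℝ := -(p * Real.logb 2 p)

/-!
Let `p i j = μ (E i ∩ F j)`, a matrix whose row and column sums are the masses of the cells of
`ℰ` and `ℱ`. Each row has finitely many nonzero entries, so subadditivity of `x ↦ -x log x`
gives `H(ℰ) ≤ H(ℰ ∨ ℱ)`; each column has at most `k` nonzero entries, so Jensen's inequality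
gives `H(ℰ ∨ ℱ) ≤ H(ℱ) + log k`. By symmetry `|H(ℰ) - H(ℱ)| ≤ log k`. The same comparison shows
that the two entropy series converge or diverge together, and when they diverge both `tsum`s
are `0`.
-/

open Real

section Entropy

variable {ι : Type*} {s : Finset ι} {p : ι → ℝ}

lemma negMulLog_sum_le (hp : ∀ i ∈ s, 0 ≤ p i) :
    negMulLog (∑ i ∈ s, p i) ≤ ∑ i ∈ s, negMulLog (p i) := by
  simp only [negMulLog, neg_mul, Finset.sum_mul, ← Finset.sum_neg_distrib]
  refine Finset.sum_le_sum fun i hi => ?_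
  rcases (hp i hi).eq_or_lt with h0 | hpos
  · simp [← h0]
  · gcongr
    exact Finset.single_le_sum hp hi

lemma sum_negMulLog_le {k : ℕ} (hp : ∀ i ∈ s, 0 ≤ p i) (hcard : s.card ≤ k) :
    ∑ i ∈ s, negMulLog (p i) ≤ negMulLog (∑ i ∈ s, p i) + (∑ i ∈ s, p i) * log k := by
  rcases s.eq_empty_or_nonempty with rfl | hs
  · simp
  set n : ℝ := (s.card : ℝ)
  have hn : 0 < n := by simpa [n] using hs.card_pos
  have jensen := concaveOn_negMulLog.le_map_sum (t := s) (w := fun _ => n⁻¹) (p := p)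
    (fun _ _ => by positivity) (by simp [n, hn.ne']) hp
  have hinv : negMulLog n⁻¹ = n⁻¹ * log n := by simp [negMulLog, log_inv]
  simp only [smul_eq_mul, ← Finset.mul_sum, negMulLog_mul, hinv] at jensen
  have hS : 0 ≤ ∑ i ∈ s, p i := Finset.sum_nonneg hp
  calc ∑ i ∈ s, negMulLog (p i) = n * (n⁻¹ * ∑ i ∈ s, negMulLog (p i)) := by field_simp
    _ ≤ n * ((∑ i ∈ s, p i) * (n⁻¹ * log n) + n⁻¹ * negMulLog (∑ i ∈ s, p i)) := by gcongr
    _ = negMulLog (∑ i ∈ s, p i) + (∑ i ∈ s, p i) * log n := by field_simp; ring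
    _ ≤ negMulLog (∑ i ∈ s, p i) + (∑ i ∈ s, p i) * log k := by
      gcongr
      exact Nat.cast_le.mpr hcard

lemma ent_eq_negMulLog_div (x : ℝ) : ent x = negMulLog x / log 2 := by
  simp only [ent, negMulLog, logb]; ring

lemma ent_zero : ent 0 = 0 := by simp [ent]

lemma ent_nonneg {x : ℝ} (h0 : 0 ≤ x) (h1 : x ≤ 1) : 0 ≤ ent x := by
  rw [ent_eq_negMulLog_div]; exact div_nonneg (negMulLog_nonneg h0 h1) (log_nonneg one_le_two)

lemma ent_sum_le (hp : ∀ i ∈ s, 0 ≤ p i) : ent (∑ i ∈ s, p i) ≤ ∑ i ∈ s, ent (p i) := by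
  simp only [ent_eq_negMulLog_div, ← Finset.sum_div]
  gcongr
  exact negMulLog_sum_le hp

lemma sum_ent_le {k : ℕ} (hp : ∀ i ∈ s, 0 ≤ p i) (hcard : s.card ≤ k) :
    ∑ i ∈ s, ent (p i) ≤ ent (∑ i ∈ s, p i) + (∑ i ∈ s, p i) * logb 2 k := by
  simp only [ent_eq_negMulLog_div, ← Finset.sum_div, logb, ← mul_div_assoc, ← add_div]
  gcongr
  exact sum_negMulLog_le hp hcard

end Entropy

section Marginals

variable {α β : Type*}

lemma ent_tsum_le_tsum_ent {q : β → ℝ} (hq : ∀ j, 0 ≤ q j) {s : Finset β}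
    (hs : ∀ j ∉ s, q j = 0) : ent (∑' j, q j) ≤ ∑' j, ent (q j) := by
  rw [tsum_eq_sum hs, tsum_eq_sum fun j hj => by rw [hs j hj, ent_zero]]
  exact ent_sum_le fun j _ => hq j

lemma tsum_ent_le {q : β → ℝ} (hq : ∀ j, 0 ≤ q j) {s : Finset β} {k : ℕ} (hcard : s.card ≤ k)
    (hs : ∀ j ∉ s, q j = 0) :
    ∑' j, ent (q j) ≤ ent (∑' j, q j) + (∑' j, q j) * logb 2 k := by
  rw [tsum_eq_sum hs, tsum_eq_sum fun j hj => by rw [hs j hj, ent_zero]]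
  exact sum_ent_le (fun j _ => hq j) hcard

variable {p : α → β → ℝ} {r : α → ℝ} {c : β → ℝ} {m : ℝ} {k : ℕ}

lemma summable_ent_uncurry_of_col_card_le (hp0 : ∀ i j, 0 ≤ p i j) (hp1 : ∀ i j, p i j ≤ 1)
    (hc : ∀ j, c j = ∑' i, p i j)
    (hcol : ∀ j, ∃ s : Finset α, s.card ≤ k ∧ ∀ i ∉ s, p i j = 0)
    (hmass : Summable c) (hsum : Summable fun j => ent (c j)) :
    Summable (Function.uncurry fun j i => ent (p i j)) := by
  refine (summable_prod_of_nonneg fun x => ent_nonneg (hp0 _ _) (hp1 _ _)).2 ⟨fun j => ?_, ?_⟩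
  · obtain ⟨s, -, hs⟩ := hcol j
    exact summable_of_ne_finset_zero (s := s) fun i hi => by simp [hs i hi, ent_zero]
  · refine (hsum.add (hmass.mul_right (logb 2 k))).of_nonneg_of_le
      (fun j => tsum_nonneg fun i => ent_nonneg (hp0 _ _) (hp1 _ _)) fun j => ?_
    obtain ⟨s, hcard, hs⟩ := hcol j
    simpa [hc j] using tsum_ent_le (fun i => hp0 i j) hcard hs

lemma summable_ent_and_tsum_ent_le_of_marginals (hp0 : ∀ i j, 0 ≤ p i j)
    (hp1 : ∀ i j, p i j ≤ 1) (hr : ∀ i, r i = ∑' j, p i j) (hr1 : ∀ i, r i ≤ 1)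
    (hc : ∀ j, c j = ∑' i, p i j)
    (hrow : ∀ i, ∃ s : Finset β, ∀ j ∉ s, p i j = 0)
    (hcol : ∀ j, ∃ s : Finset α, s.card ≤ k ∧ ∀ i ∉ s, p i j = 0)
    (hmass : HasSum c m) (hsum : Summable fun j => ent (c j)) :
    Summable (fun i => ent (r i)) ∧ ∑' i, ent (r i) ≤ ∑' j, ent (c j) + m * logb 2 k := by
  have hjoint := summable_ent_uncurry_of_col_card_le hp0 hp1 hc hcol hmass.summable hsum
  have hrow_le : ∀ i, ent (r i) ≤ ∑' j, ent (p i j) := fun i => by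
    obtain ⟨s, hs⟩ := hrow i
    exact hr i ▸ ent_tsum_le_tsum_ent (hp0 i) hs
  have hcol_le : ∀ j, ∑' i, ent (p i j) ≤ ent (c j) + c j * logb 2 k := fun j => by
    obtain ⟨s, hcard, hs⟩ := hcol j
    exact hc j ▸ tsum_ent_le (fun i => hp0 i j) hcard hs
  have hrows : Summable fun i => ∑' j, ent (p i j) := hjoint.prod_symm.prod
  have hr_sum : Summable fun i => ent (r i) := hrows.of_nonneg_of_le
    (fun i => ent_nonneg (hr i ▸ tsum_nonneg (hp0 i)) (hr1 i)) hrow_le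
  have hbound : Summable fun j => ent (c j) + c j * logb 2 k :=
    hsum.add (hmass.summable.mul_right _)
  refine ⟨hr_sum, ?_⟩
  calc ∑' i, ent (r i) ≤ ∑' i, ∑' j, ent (p i j) := hr_sum.tsum_le_tsum hrow_le hrows
    _ = ∑' j, ∑' i, ent (p i j) := hjoint.tsum_comm
    _ ≤ ∑' j, (ent (c j) + c j * logb 2 k) := hjoint.prod.tsum_le_tsum hcol_le hbound
    _ = ∑' j, ent (c j) + m * logb 2 k := by
      rw [hsum.tsum_add (hmass.summable.mul_right _), tsum_mul_right, hmass.tsum_eq]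

end Marginals

section Partitions

variable {X ι : Type*} [MeasurableSpace X] {μ : Measure X}

lemma exists_card_le_toReal_measure_eq_zero {A : ι → Set X} {k : ℕ}
    (h : ∃ s : Finset ι, s.card ≤ k ∧ ∀ j, (A j).Nonempty → j ∈ s) :
    ∃ s : Finset ι, s.card ≤ k ∧ ∀ j ∉ s, (μ (A j)).toReal = 0 :=
  let ⟨s, hcard, hs⟩ := h
  ⟨s, hcard, fun j hj => by simp [Set.not_nonempty_iff_eq_empty.1 (mt (hs j) hj)]⟩

variable [Countable ι] {F : ι → Set X}

lemma toReal_measure_eq_tsum_inter [IsFiniteMeasure μ] (hFmeas : ∀ j, MeasurableSet (F j))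
    (hFdisj : Pairwise (Function.onFun Disjoint F)) (hFcover : (⋃ j, F j) = Set.univ)
    {A : Set X} (hA : MeasurableSet A) : (μ A).toReal = ∑' j, (μ (A ∩ F j)).toReal := by
  rw [← ENNReal.tsum_toReal_eq fun j => measure_ne_top μ _, ← measure_iUnion
    (fun i j hij => (hFdisj hij).mono Set.inter_subset_right Set.inter_subset_right)
    fun j => hA.inter (hFmeas j), ← Set.inter_iUnion, hFcover, Set.inter_univ]

lemma hasSum_toReal_measure [IsProbabilityMeasure μ] (hFmeas : ∀ j, MeasurableSet (F j))
    (hFdisj : Pairwise (Function.onFun Disjoint F)) (hFcover : (⋃ j, F j) = Set.univ) :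
    HasSum (fun j => (μ (F j)).toReal) 1 := by
  have htot : ∑' j, μ (F j) = 1 := by
    rw [← measure_iUnion hFdisj hFmeas, hFcover, measure_univ]
  have h := ENNReal.hasSum_toReal (htot ▸ ENNReal.one_ne_top)
  rwa [← ENNReal.tsum_toReal_eq fun j => measure_ne_top μ _, htot, ENNReal.toReal_one] at h

end Partitions

theorem entropy_diff_of_commensurable_partitions_general
    {X : Type*} [MeasurableSpace X] (μ : Measure X) [IsProbabilityMeasure μ]
    (E F : ℕ → Set X)
    (hEmeas : ∀ i, MeasurableSet (E i)) (hFmeas : ∀ j, MeasurableSet (F j))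
    (hEdisj : Pairwise (Function.onFun Disjoint E))
    (hFdisj : Pairwise (Function.onFun Disjoint F))
    (hEcover : (⋃ i, E i) = Set.univ) (hFcover : (⋃ j, F j) = Set.univ)
    (k : ℕ)
    (hEF : ∀ i, ∃ s : Finset ℕ, s.card ≤ k ∧ ∀ j, (E i ∩ F j).Nonempty → j ∈ s)
    (hFE : ∀ j, ∃ s : Finset ℕ, s.card ≤ k ∧ ∀ i, (E i ∩ F j).Nonempty → i ∈ s) :
    |(∑' i, ent ((μ (E i)).toReal)) - ∑' j, ent ((μ (F j)).toReal)| ≤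
      2 * Real.logb 2 k := by
  set p : ℕ → ℕ → ℝ := fun i j => (μ (E i ∩ F j)).toReal
  have hp0 : ∀ i j, 0 ≤ p i j := fun _ _ => ENNReal.toReal_nonneg
  have hp1 : ∀ i j, p i j ≤ 1 := fun _ _ => measureReal_le_one
  have hE : ∀ i, (μ (E i)).toReal = ∑' j, p i j :=
    fun i => toReal_measure_eq_tsum_inter hFmeas hFdisj hFcover (hEmeas i)
  have hF : ∀ j, (μ (F j)).toReal = ∑' i, p i j := fun j =>
    (toReal_measure_eq_tsum_inter hEmeas hEdisj hEcover (hFmeas j)).trans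
      (tsum_congr fun i => by rw [Set.inter_comm])
  have hrow := fun i => exists_card_le_toReal_measure_eq_zero (μ := μ) (hEF i)
  have hcol := fun j => exists_card_le_toReal_measure_eq_zero (μ := μ) (hFE j)
  have hE_bound := summable_ent_and_tsum_ent_le_of_marginals hp0 hp1 hE
    (fun _ => measureReal_le_one) hF (fun i => (hrow i).imp fun _ => And.right) hcol
    (hasSum_toReal_measure hFmeas hFdisj hFcover)
  have hF_bound := summable_ent_and_tsum_ent_le_of_marginals (p := fun j i => p i j)
    (fun j i => hp0 i j) (fun j i => hp1 i j) hF (fun _ => measureReal_le_one) hE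
    (fun j => (hcol j).imp fun _ => And.right) hrow (hasSum_toReal_measure hEmeas hEdisj hEcover)
  have hlog : 0 ≤ logb 2 k := div_nonneg (log_natCast_nonneg k) (log_nonneg one_le_two)
  by_cases hFsum : Summable fun j => ent (μ (F j)).toReal
  · obtain ⟨hEsum, hE_le⟩ := hE_bound hFsum
    have hF_le := (hF_bound hEsum).2
    rw [abs_le]
    constructor <;> linarith
  · have hEsum : ¬ Summable fun i => ent (μ (E i)).toReal := fun h => hFsum (hF_bound h).1
    rw [tsum_eq_zero_of_not_summable hFsum, tsum_eq_zero_of_not_summable hEsum, sub_self,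
      abs_zero]
    linarith

/-- If `ℰ` and `ℱ` are countable partitions such that each element of `ℰ`
intersects at most `k` elements of `ℱ` and vice versa, then for every probability
measure `μ`, `|H(μ,ℰ) − H(μ,ℱ)| ≤ 2 log k`. -/
theorem entropy_diff_of_commensurable_partitions
    {X : Type*} [MeasurableSpace X] (μ : Measure X) [IsProbabilityMeasure μ]
    (E F : ℕ → Set X)
    (hEmeas : ∀ i, MeasurableSet (E i)) (hFmeas : ∀ j, MeasurableSet (F j))
    (hEdisj : Pairwise (Function.onFun Disjoint E))
    (hFdisj : Pairwise (Function.onFun Disjoint F))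
    (hEcover : (⋃ i, E i) = Set.univ) (hFcover : (⋃ j, F j) = Set.univ)
    (k : ℕ) (hk : 1 ≤ k)
    (hEF : ∀ i, ∃ s : Finset ℕ, s.card ≤ k ∧ ∀ j, (E i ∩ F j).Nonempty → j ∈ s)
    (hFE : ∀ j, ∃ s : Finset ℕ, s.card ≤ k ∧ ∀ i, (E i ∩ F j).Nonempty → i ∈ s) :
    |(∑' i, ent ((μ (E i)).toReal)) - ∑' j, ent ((μ (F j)).toReal)| ≤
      2 * Real.logb 2 k :=
  entropy_diff_of_commensurable_partitions_general μ E F hEmeas hFmeas hEdisj hFdisj hEcover hFcover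
    k hEF hFE
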